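/- Let G = (V, E) be an edge-labeled DAG with labels c : E → ℝ, with set of sources X and set of sinks Y. Eliminate all intermediate vertices one after another, in an arbitrary order, by vertex elimination (each elimination applied to the current graph). The resulting graph G' is bipartite: every edge of G' goes from a vertex of X to a vertex of Y, and for every source s ∈ X and sink t ∈ Y the label of the edge (s,t) in G' (taken to be 0 if the edge is absent) equals the original path sum J_G(s, t). -/

import Mathlib

open scoped Classical

/-- A path from `s` to `t`: a nonempty sequence of consecutive edges, recorded as the
list of its vertices (at least two of them, consecutive ones related by `R`). -/
def IsPath {α : Type*} (R : α → α → Prop) (s t : α) (p : List α) : Prop :=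
  2 ≤ p.length ∧ p.Chain' R ∧ p.head? = some s ∧ p.getLast? = some t

/-- The path sum `J_G(s,t)`: the sum over all paths from `s` to `t` of the product of
the edge labels along the path (an empty sum is `0`). -/
noncomputable def pathSum {α : Type*} (R : α → α → Prop) (c : α → α → ℝ) (s t : α) : ℝ :=
  ∑' p : {p : List α // IsPath R s t p},
    ((p.1.zip p.1.tail).map (fun e => c e.1 e.2)).prod

/-- Adjacency after vertex elimination of `j`: the vertex `j` is isolated (removed),
all other edges are kept, and for every predecessor `i` and successor `k` of `j`
the (possibly fill) edge `(i,k)` is present. -/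
def elimAdj {V : Type*} [DecidableEq V] (A : V → V → Bool) (j : V) : V → V → Bool :=
  fun x y => !decide (x = j) && !decide (y = j) && (A x y || (A x j && A j y))

/-- Labels after vertex elimination of `j`: for a predecessor `i` and successor `k`
of `j` the label of `(i,k)` becomes `c i k + c j k * c i j` if `(i,k)` was an edge,
and `c j k * c i j` for a fill edge; all other edges keep their labels. -/
noncomputable def elimLab {V : Type*} [DecidableEq V] (A : V → V → Bool)
    (c : V → V → ℝ) (j : V) : V → V → ℝ :=
  fun x y =>
    if A x j ∧ A j y then
      (if A x y then c x y + c j y * c x j else c j y * c x j)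
    else c x y

/-!
Encode the labeled dag by its weight matrix `W` (`W x y = c x y` on edges, `0` elsewhere).
The entry `(W ^ n) s t` is the sum of the values of the paths with `n` edges, and a ranking
makes `W` nilpotent, so `(1 - W)⁻¹ = 1 + J` where `J s t` is the path sum. Eliminating `j`
turns `1 - W` into `(1 + W P) (1 - W) (1 + P W)`, where `P` projects onto `j` and `P W P = 0`;
the outer factors are units that only touch row and column `j`, so the entries of
`(1 - W)⁻¹` between vertices not yet eliminated never change. Once every intermediate vertex
is gone, no two edges are consecutive, hence `(1 - W')⁻¹ = 1 + W'` and `W' s t = J s t`.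
-/

section

open Finset Matrix Relation

variable {V : Type*} {β : Type*} [Preorder β] {f : V → β}

noncomputable def weightMatrix (A : V → V → Bool) (c : V → V → ℝ) : Matrix V V ℝ :=
  Matrix.of fun x y => if A x y then c x y else 0

noncomputable def edgeProd (c : V → V → ℝ) (p : List V) : ℝ :=
  ((p.zip p.tail).map fun e => c e.1 e.2).prod

@[simp]
lemma edgeProd_singleton (c : V → V → ℝ) (a : V) : edgeProd c [a] = 1 := by
  simp [edgeProd]

lemma edgeProd_cons {c : V → V → ℝ} {a b : V} {p : List V} (hp : p.head? = some b) :
    edgeProd c (a :: p) = c a b * edgeProd c p := by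
  cases p with
  | nil => simp at hp
  | cons b' p => simp_all [edgeProd]

lemma isPath_iff {R : V → V → Prop} {s t : V} {p : List V} :
    IsPath R s t p ↔
      2 ≤ p.length ∧ p.IsChain R ∧ p.head? = some s ∧ p.getLast? = some t :=
  Iff.rfl

lemma List.IsChain.nodup_of_rank {R : V → V → Prop}
    (hf : ∀ a b, R a b → f a < f b) {p : List V} (hp : p.IsChain R) : p.Nodup := by
  have hlt : (p.map f).IsChain (· < ·) := List.isChain_map_of_isChain f hf hp
  exact List.Nodup.of_map f ((List.isChain_iff_pairwise.mp hlt).imp ne_of_lt)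

section Paths

variable [Fintype V] [DecidableEq V]

def finsetWalkLength (A : V → V → Bool) : ℕ → V → V → Finset (List V)
  | 0, s, t => if s = t then {[s]} else ∅
  | n + 1, s, t =>
    (univ.filter fun z => A s z).biUnion fun z => (finsetWalkLength A n z t).image (s :: ·)

lemma mem_finsetWalkLength {A : V → V → Bool} {n : ℕ} {s t : V} {p : List V} :
    p ∈ finsetWalkLength A n s t ↔ p.length = n + 1 ∧ p.IsChain (fun a b => A a b = true) ∧
      p.head? = some s ∧ p.getLast? = some t := by
  induction n generalizing s p with
  | zero =>
    rw [finsetWalkLength, zero_add, List.length_eq_one_iff]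
    split_ifs with hst <;> aesop
  | succ n ih =>
    simp only [finsetWalkLength, mem_biUnion, mem_filter, mem_univ, true_and, mem_image, ih]
    rcases p with _ | ⟨a, _ | ⟨b, q⟩⟩ <;> aesop (add simp List.isChain_cons_cons)

lemma head?_of_mem_finsetWalkLength {A : V → V → Bool} {n : ℕ} {s t : V} {p : List V}
    (hp : p ∈ finsetWalkLength A n s t) : p.head? = some s :=
  (mem_finsetWalkLength.mp hp).2.2.1

lemma weightMatrix_pow_apply (A : V → V → Bool) (c : V → V → ℝ) (n : ℕ) (s t : V) :
    (weightMatrix A c ^ n) s t = ∑ p ∈ finsetWalkLength A n s t, edgeProd c p := by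
  induction n generalizing s with
  | zero => by_cases hst : s = t <;> simp [finsetWalkLength, one_apply, hst]
  | succ n ih =>
    have hdisj : ((univ.filter fun z => A s z) : Set V).PairwiseDisjoint
        fun z => (finsetWalkLength A n z t).image (s :: ·) := by
      intro z₁ _ z₂ _ hne
      simp only [Function.onFun, disjoint_left, mem_image]
      rintro _ ⟨q₁, hq₁, rfl⟩ ⟨q₂, hq₂, hq⟩
      cases List.cons_injective hq
      exact hne (Option.some_injective _
        ((head?_of_mem_finsetWalkLength hq₁).symm.trans (head?_of_mem_finsetWalkLength hq₂)))
    rw [pow_succ', mul_apply, finsetWalkLength, sum_biUnion hdisj, sum_filter]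
    refine sum_congr rfl fun z _ => ?_
    by_cases hsz : A s z = true
    · rw [sum_image fun _ _ _ _ h => List.cons_injective h, ih, mul_sum]
      simp only [weightMatrix, of_apply, hsz, if_true]
      exact sum_congr rfl fun q hq => (edgeProd_cons (head?_of_mem_finsetWalkLength hq)).symm
    · simp [weightMatrix, hsz]

lemma weightMatrix_pow_card_eq_zero {A : V → V → Bool}
    (hf : ∀ a b, A a b = true → f a < f b) (c : V → V → ℝ) :
    weightMatrix A c ^ Fintype.card V = 0 := by
  ext s t
  rw [weightMatrix_pow_apply, Matrix.zero_apply]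
  refine sum_eq_zero fun p hp => ?_
  obtain ⟨hlen, hchain, -⟩ := mem_finsetWalkLength.mp hp
  have := (hchain.nodup_of_rank hf).length_le_card
  omega

lemma pathSum_eq_sum_weightMatrix_pow {A : V → V → Bool}
    (hf : ∀ a b, A a b = true → f a < f b) (c : V → V → ℝ) (s t : V) :
    pathSum (fun a b => A a b = true) c s t =
      ∑ n ∈ range (Fintype.card V), (weightMatrix A c ^ (n + 1)) s t := by
  set S := (range (Fintype.card V)).biUnion fun n => finsetWalkLength A (n + 1) s t
  have hS : ∀ p, IsPath (fun a b => A a b = true) s t p ↔ p ∈ S := by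
    intro p
    simp only [S, isPath_iff, mem_biUnion, mem_range, mem_finsetWalkLength]
    constructor
    · rintro ⟨hlen, hchain, hs, ht⟩
      have := (hchain.nodup_of_rank hf).length_le_card
      exact ⟨p.length - 2, by omega, by omega, hchain, hs, ht⟩
    · rintro ⟨n, -, hlen, hchain, hs, ht⟩
      exact ⟨by omega, hchain, hs, ht⟩
  have hdisj : (range (Fintype.card V) : Set ℕ).PairwiseDisjoint
      fun n => finsetWalkLength A (n + 1) s t := by
    intro m _ n _ hne
    simp only [Function.onFun, disjoint_left]
    intro p hm hn
    have := (mem_finsetWalkLength.mp hm).1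
    have := (mem_finsetWalkLength.mp hn).1
    omega
  calc pathSum (fun a b => A a b = true) c s t = ∑' p : {p // p ∈ S}, edgeProd c p.1 :=
        (Equiv.subtypeEquivRight hS).tsum_eq fun p => edgeProd c p.1
    _ = ∑ p ∈ S, edgeProd c p := tsum_subtype S (edgeProd c)
    _ = _ := by
      rw [sum_biUnion hdisj]
      exact sum_congr rfl fun n _ => (weightMatrix_pow_apply A c (n + 1) s t).symm

theorem one_sub_weightMatrix_mul_one_add_pathSum {A : V → V → Bool}
    (hf : ∀ a b, A a b = true → f a < f b) (c : V → V → ℝ) :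
    (1 - weightMatrix A c) * (1 + Matrix.of (pathSum (fun a b => A a b = true) c)) = 1 := by
  set W := weightMatrix A c
  have hJ : 1 + Matrix.of (pathSum (fun a b => A a b = true) c) =
      ∑ n ∈ range (Fintype.card V + 1), W ^ n := by
    ext s t
    rw [sum_range_succ', pow_zero, add_comm, Matrix.add_apply, Matrix.add_apply, of_apply,
      pathSum_eq_sum_weightMatrix_pow hf, Matrix.sum_apply]
  rw [hJ, mul_neg_geom_sum, pow_succ, weightMatrix_pow_card_eq_zero hf, zero_mul, sub_zero]

end Paths

theorem one_sub_eliminate_mul_eq_one {R : Type*} [Ring R] {p w m : R} (hp : p * p = p)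
    (hpwp : p * w * p = 0) (hm : (1 - w) * m = 1) :
    (1 - (w - p * w - w * p + w * p * w)) * ((1 - p * w) * m * (1 - w * p)) = 1 := by
  have hfac : (1 + w * p) * (1 - w) * (1 + p * w) =
      1 - (w - p * w - w * p + w * p * w) + w * (p * p - p) * w - w * (p * w * p) * w := by
    noncomm_ring
  rw [hp, hpwp, sub_self, mul_zero, zero_mul, add_zero, sub_zero] at hfac
  have hpw : (1 + p * w) * (1 - p * w) = 1 := by
    rw [show (1 + p * w) * (1 - p * w) = 1 - p * w * p * w by noncomm_ring, hpwp, zero_mul,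
      sub_zero]
  have hwp : (1 + w * p) * (1 - w * p) = 1 := by
    rw [show (1 + w * p) * (1 - w * p) = 1 - w * (p * w * p) by noncomm_ring, hpwp, mul_zero,
      sub_zero]
  calc (1 - (w - p * w - w * p + w * p * w)) * ((1 - p * w) * m * (1 - w * p))
      = (1 + w * p) * ((1 - w) * ((1 + p * w) * (1 - p * w)) * m) * (1 - w * p) := by
        rw [← hfac]; simp only [mul_assoc]
    _ = 1 := by rw [hpw, mul_one, hm, mul_one, hwp]

section Elimination

variable [DecidableEq V]

noncomputable def eliminate (G : (V → V → Bool) × (V → V → ℝ)) (j : V) :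
    (V → V → Bool) × (V → V → ℝ) :=
  (elimAdj G.1 j, elimLab G.1 G.2 j)

lemma elimAdj_eq_true_iff {B : V → V → Bool} {j x y : V} :
    elimAdj B j x y = true ↔
      x ≠ j ∧ y ≠ j ∧ (B x y = true ∨ B x j = true ∧ B j y = true) := by
  simp [elimAdj, and_assoc]

lemma mul_single_mul_apply [Fintype V] {R : Type*} [Semiring R] (M N : Matrix V V R)
    (j x y : V) :
    (M * single j j (1 : R) * N) x y = M x j * N j y := by
  rw [mul_apply, sum_eq_single j] <;> intros <;> simp_all

lemma weightMatrix_elimAdj_elimLab [Fintype V] {B : V → V → Bool} (d : V → V → ℝ) {j : V}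
    (hj : B j j = false) :
    weightMatrix (elimAdj B j) (elimLab B d j) =
      weightMatrix B d - single j j 1 * weightMatrix B d - weightMatrix B d * single j j 1 +
        weightMatrix B d * single j j 1 * weightMatrix B d := by
  ext x y
  rw [Matrix.add_apply, Matrix.sub_apply, Matrix.sub_apply, mul_single_mul_apply]
  by_cases hx : x = j
  · subst hx
    by_cases hy : y = x <;> simp [weightMatrix, elimAdj, hy, hj]
  by_cases hy : y = j
  · subst hy
    simp [weightMatrix, elimAdj, hx, hj]
  rw [single_mul_apply_of_ne _ _ _ _ _ hx, mul_single_apply_of_ne _ _ _ _ _ hy]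
  cases hxy : B x y <;> cases hxj : B x j <;> cases hjy : B j y <;>
    simp [weightMatrix, elimAdj, elimLab, hx, hy, hxy, hxj, hjy, mul_comm]

lemma transGen_of_transGen_elimAdj {B : V → V → Bool} {j x y : V}
    (h : TransGen (fun a b => elimAdj B j a b = true) x y) :
    x ≠ j ∧ y ≠ j ∧ TransGen (fun a b => B a b = true) x y := by
  obtain ⟨z, hxz, -⟩ := TransGen.head'_iff.mp h
  obtain ⟨z', -, hzy⟩ := TransGen.tail'_iff.mp h
  refine ⟨(elimAdj_eq_true_iff.mp hxz).1, (elimAdj_eq_true_iff.mp hzy).2.1,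
    TransGen.closed (fun a b hab => ?_) x y h⟩
  rcases (elimAdj_eq_true_iff.mp hab).2.2 with hab | ⟨haj, hjb⟩
  · exact .single hab
  · exact .tail (.single haj) hjb

lemma notMem_and_transGen_of_foldl_eliminate {L : List V}
    {G : (V → V → Bool) × (V → V → ℝ)} {x y : V}
    (h : (L.foldl eliminate G).1 x y = true) :
    x ∉ L ∧ y ∉ L ∧ TransGen (fun a b => G.1 a b = true) x y := by
  induction L generalizing G with
  | nil => exact ⟨List.not_mem_nil, List.not_mem_nil, .single h⟩
  | cons j L ih =>
    obtain ⟨hx, hy, hxy⟩ := ih h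
    obtain ⟨hxj, hyj, hxy⟩ := transGen_of_transGen_elimAdj hxy
    simp only [List.mem_cons, not_or]
    exact ⟨⟨hxj, hx⟩, ⟨hyj, hy⟩, hxy⟩

lemma lt_of_elimAdj_eq_true {B : V → V → Bool} (hf : ∀ a b, B a b = true → f a < f b)
    {j a b : V} (hab : elimAdj B j a b = true) : f a < f b := by
  rcases (elimAdj_eq_true_iff.mp hab).2.2 with hab | ⟨haj, hjb⟩
  · exact hf a b hab
  · exact (hf a j haj).trans (hf j b hjb)

lemma foldl_eliminate_fst_spec {A : V → V → Bool} {c : V → V → ℝ} {L : List V}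
    (hL : ∀ u v w, A u v = true → A v w = true → v ∈ L) {x y : V}
    (h : (L.foldl eliminate (A, c)).1 x y = true) :
    (∀ u, A u x = false) ∧ (∀ w, A y w = false) ∧
      TransGen (fun a b => A a b = true) x y := by
  obtain ⟨hx, hy, hxy⟩ := notMem_and_transGen_of_foldl_eliminate h
  obtain ⟨w, hxw, -⟩ := TransGen.head'_iff.mp hxy
  obtain ⟨u, -, huy⟩ := TransGen.tail'_iff.mp hxy
  exact ⟨fun u' => Bool.eq_false_iff.mpr fun hu'x => hx (hL u' x w hu'x hxw),
    fun w' => Bool.eq_false_iff.mpr fun hyw' => hy (hL u y w' huy hyw'), hxy⟩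

variable [Fintype V]

theorem inv_one_sub_weightMatrix_foldl_apply (L : List V)
    {G : (V → V → Bool) × (V → V → ℝ)} (hf : ∀ a b, G.1 a b = true → f a < f b)
    {M : Matrix V V ℝ} (hM : (1 - weightMatrix G.1 G.2) * M = 1) {x y : V} (hx : x ∉ L)
    (hy : y ∉ L) :
    (1 - weightMatrix (L.foldl eliminate G).1 (L.foldl eliminate G).2)⁻¹ x y = M x y := by
  induction L generalizing G M with
  | nil => rw [List.foldl_nil, inv_eq_right_inv hM]
  | cons j L ih =>
    simp only [List.mem_cons, not_or] at hx hy
    set W := weightMatrix G.1 G.2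
    set P : Matrix V V ℝ := single j j 1
    have hj : G.1 j j = false := Bool.eq_false_iff.mpr fun h => lt_irrefl _ (hf j j h)
    have hPWP : P * W * P = 0 := by simp [P, W, weightMatrix, hj]
    have hM' := one_sub_eliminate_mul_eq_one (by simp [P]) hPWP hM
    rw [← weightMatrix_elimAdj_elimLab G.2 hj] at hM'
    rw [List.foldl_cons,
      ih (G := eliminate G j) (fun _ _ => lt_of_elimAdj_eq_true hf) hM' hx.2 hy.2,
      show (1 - P * W) * M * (1 - W * P) = M - P * (W * M) - M * W * P + P * (W * M * W * P) by
        noncomm_ring]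
    simp [P, hx.1, hy.1]

lemma inv_one_sub_weightMatrix_of_forall_eq_false
    {B : V → V → Bool} (d : V → V → ℝ) (h : ∀ x z y, B x z = true → B z y = false) :
    (1 - weightMatrix B d)⁻¹ = 1 + weightMatrix B d := by
  have hsq : weightMatrix B d * weightMatrix B d = 0 := by
    ext x y
    refine sum_eq_zero fun z _ => ?_
    by_cases hxz : B x z = true <;> simp [weightMatrix, hxz, h x z y]
  exact inv_eq_right_inv (by rw [show (1 - weightMatrix B d) * (1 + weightMatrix B d) =
    1 - weightMatrix B d * weightMatrix B d by noncomm_ring, hsq, sub_zero])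

end Elimination

end

theorem complete_vertex_elimination_bipartite_general
    {V : Type*} [Fintype V] [DecidableEq V]
    (A : V → V → Bool) (c : V → V → ℝ)
    (f : V → ℕ) (hacyc : ∀ i j, A i j = true → f i < f j)
    (L : List V)
    (hmem : ∀ j, j ∈ L ↔ ((∃ i, A i j = true) ∧ (∃ k, A j k = true)))
    (G' : (V → V → Bool) × (V → V → ℝ))
    (hG' : G' = L.foldl (fun p j => (elimAdj p.1 j, elimLab p.1 p.2 j)) (A, c)) :
    (∀ x y, G'.1 x y = true → (∀ u, A u x = false) ∧ (∀ w, A y w = false)) ∧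
    (∀ s t, (∀ u, A u s = false) → (∀ w, A t w = false) →
      (if G'.1 s t then G'.2 s t else 0) = pathSum (fun a b => A a b = true) c s t) := by
  change G' = L.foldl eliminate (A, c) at hG'
  have hedge : ∀ x y, G'.1 x y = true → (∀ u, A u x = false) ∧ (∀ w, A y w = false) ∧
      Relation.TransGen (fun a b => A a b = true) x y := by
    subst hG'
    exact fun x y =>
      foldl_eliminate_fst_spec fun u v w huv hvw => (hmem v).mpr ⟨⟨u, huv⟩, w, hvw⟩
  refine ⟨fun x y h => ⟨(hedge x y h).1, (hedge x y h).2.1⟩, fun s t hs ht => ?_⟩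
  have hsL : s ∉ L := fun h => by obtain ⟨⟨u, hu⟩, -⟩ := (hmem s).mp h; simp [hs u] at hu
  have htL : t ∉ L := fun h => by obtain ⟨-, w, hw⟩ := (hmem t).mp h; simp [ht w] at hw
  have hjac := inv_one_sub_weightMatrix_foldl_apply L (G := (A, c)) hacyc
    (one_sub_weightMatrix_mul_one_add_pathSum hacyc c) hsL htL
  have hnot_consecutive : ∀ x z y, G'.1 x z = true → G'.1 z y = false := fun x z y hxz =>
    Bool.eq_false_iff.mpr fun hzy => by
      obtain ⟨w, hzw, -⟩ := Relation.TransGen.head'_iff.mp (hedge z y hzy).2.2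
      simp [(hedge x z hxz).2.1 w] at hzw
  rw [← hG', inv_one_sub_weightMatrix_of_forall_eq_false G'.2 hnot_consecutive] at hjac
  simpa [weightMatrix] using hjac

/-- **Complete vertex elimination yields the bipartite Jacobian dag.**
Eliminating all intermediate vertices of an edge-labeled dag `G` one after another, in
an arbitrary order (`L` is any duplicate-free enumeration of the intermediate
vertices, and each elimination is applied to the current graph via the fold), yields a
graph `G'` in which every edge goes from a source of `G` to a sink of `G`, and for
every source `s` and sink `t` the label of the edge `(s,t)` in `G'` (taken to be `0`
if absent) equals the original path sum `J_G(s,t)`. -/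
theorem complete_vertex_elimination_bipartite
    {V : Type*} [Fintype V] [DecidableEq V]
    (A : V → V → Bool) (c : V → V → ℝ)
    (f : V → ℕ) (hacyc : ∀ i j, A i j = true → f i < f j)
    (L : List V) (hnd : L.Nodup)
    (hmem : ∀ j, j ∈ L ↔ ((∃ i, A i j = true) ∧ (∃ k, A j k = true)))
    (G' : (V → V → Bool) × (V → V → ℝ))
    (hG' : G' = L.foldl (fun p j => (elimAdj p.1 j, elimLab p.1 p.2 j)) (A, c)) :
    (∀ x y, G'.1 x y = true → (∀ u, A u x = false) ∧ (∀ w, A y w = false)) ∧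
    (∀ s t, (∀ u, A u s = false) → (∀ w, A t w = false) →
      (if G'.1 s t then G'.2 s t else 0) = pathSum (fun a b => A a b = true) c s t) :=
  complete_vertex_elimination_bipartite_general A c f hacyc L hmem G' hG'
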